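/- arXiv:2209.08629 — 4 statements merged into one kernel-verified Lean document; each statement's English description precedes it below -/
import Mathlib

section
/- Let ξ ∈ L¹(P) be F_T-measurable and let M be a modification with a.s. continuous paths of the martingale t ↦ E[ξ | F_t], and define β̂_t = M_t/(T−t) − ∫₀^t M_u/(T−u)² du for t ∈ [0,T). Then almost surely ∫₀^t β̂_u du = (T−t)·∫₀^t M_u/(T−u)² du for every t ∈ [0,T), and lim_{t→T⁻} ∫₀^t β̂_u du = ξ. In particular, if ∫₀^T |β̂_u| du < ∞ a.s., then ∫₀^T β̂_u du = ξ a.s. -/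
/-!
Write `G t = ∫₀ᵗ M_u / (T - u)² du`, so that `β̂ = M / (T - t) - G`. Since `G' = M / (T - t)²`, the
derivative of `(T - t) G(t)` is exactly `β̂_t`, whence `∫₀ᵗ β̂ = (T - t) G(t)`. The kernel
`(T - t) / (T - u)²` on `[0, t]` has mass `t / T → 1` and concentrates at `u = T`, so by continuity
of the path `(T - t) G(t) → M_T`, and `M_T = E[ξ | F_T] = ξ` a.s. When `β̂` is integrable on
`(0, T]`, its primitive is continuous at `T`, so `∫₀ᵀ β̂` equals this limit.
-/

open MeasureTheory Filter Set
open scoped Topology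

noncomputable def betaHat (T : ℝ) (f : ℝ → ℝ) (t : ℝ) : ℝ :=
  f t / (T - t) - ∫ u in Ioc 0 t, f u / (T - u) ^ 2

theorem setIntegral_Ioc_eq_of_tendsto {a T L : ℝ} {b : ℝ → ℝ} (haT : a < T)
    (hb : IntegrableOn b (Ioc a T))
    (h : Tendsto (fun t => ∫ u in Ioc a t, b u) (𝓝[<] T) (𝓝 L)) :
    ∫ u in Ioc a T, b u = L := by
  have hcont : ContinuousOn (fun t => ∫ u in a..t, b u) (Icc a T) := by
    rw [← uIcc_of_le haT.le]
    exact intervalIntegral.continuousOn_primitive_interval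
      (by rwa [uIcc_of_le haT.le, integrableOn_Icc_iff_integrableOn_Ioc])
  have hlim : Tendsto (fun t => ∫ u in a..t, b u) (𝓝[<] T) (𝓝 (∫ u in a..T, b u)) := by
    rw [← nhdsWithin_Ioo_eq_nhdsLT haT]
    exact (hcont T ⟨haT.le, le_rfl⟩).mono Ioo_subset_Icc_self
  rw [← intervalIntegral.integral_of_le haT.le]
  refine tendsto_nhds_unique (hlim.congr' ?_) h
  filter_upwards [Ioo_mem_nhdsLT haT] with t ht using intervalIntegral.integral_of_le ht.1.le

section

variable {T : ℝ} {f g : ℝ → ℝ}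

theorem continuousOn_div_sub_pow {s : Set ℝ} (hf : ContinuousOn f s) (hs : s ⊆ Iio T) (n : ℕ) :
    ContinuousOn (fun u => f u / (T - u) ^ n) s :=
  hf.div (by fun_prop) fun u hu => pow_ne_zero _ (sub_ne_zero.mpr (hs hu).ne')

theorem intervalIntegrable_div_sub_sq {s t : ℝ} (hf : ContinuousOn f (uIcc s t))
    (hs : s < T) (ht : t < T) :
    IntervalIntegrable (fun u => f u / (T - u) ^ 2) volume s t :=
  (continuousOn_div_sub_pow hf (fun _ hu => hu.2.trans_lt (max_lt hs ht)) 2).intervalIntegrable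

theorem integral_one_div_sub_sq {s t : ℝ} (hs : s < T) (ht : t < T) :
    ∫ u in s..t, 1 / (T - u) ^ 2 = 1 / (T - t) - 1 / (T - s) := by
  refine intervalIntegral.integral_eq_sub_of_hasDerivAt (f := fun u => 1 / (T - u))
    (fun x hx => ?_) (intervalIntegrable_div_sub_sq (f := fun _ => 1) continuousOn_const hs ht)
  have hx : T - x ≠ 0 := sub_ne_zero.mpr (hx.2.trans_lt (max_lt hs ht)).ne'
  simpa [one_div] using ((hasDerivAt_id x).const_sub T).fun_inv hx

theorem hasDerivAt_integral_div_sub_sq (hf : ContinuousOn f (Icc 0 T)) {x : ℝ}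
    (hx : x ∈ Ioo 0 T) :
    HasDerivAt (fun t => ∫ u in 0..t, f u / (T - u) ^ 2) (f x / (T - x) ^ 2) x := by
  have hcont : ContinuousOn (fun u => f u / (T - u) ^ 2) (Ioo 0 T) :=
    continuousOn_div_sub_pow (hf.mono Ioo_subset_Icc_self) (fun _ hu => hu.2) 2
  refine intervalIntegral.integral_hasDerivAt_right
    (intervalIntegrable_div_sub_sq (hf.mono ?_) (hx.1.trans hx.2) hx.2)
    (hcont.stronglyMeasurableAtFilter isOpen_Ioo x hx)
    (hcont.continuousAt (Ioo_mem_nhds hx.1 hx.2))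
  rw [uIcc_of_le hx.1.le]
  exact Icc_subset_Icc_right hx.2.le

theorem continuousOn_integral_div_sub_sq {s t : ℝ} (hf : ContinuousOn f (uIcc s t))
    (hs : s < T) (ht : t < T) :
    ContinuousOn (fun x => ∫ u in s..x, f u / (T - u) ^ 2) (uIcc s t) :=
  intervalIntegral.continuousOn_primitive_interval
    (continuousOn_div_sub_pow hf (fun _ hu => hu.2.trans_lt (max_lt hs ht)) 2).integrableOn_uIcc

theorem betaHat_eq {u : ℝ} (hu : 0 ≤ u) :
    betaHat T f u = f u / (T - u) - ∫ v in 0..u, f v / (T - v) ^ 2 := by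
  rw [betaHat, intervalIntegral.integral_of_le hu]

theorem integral_betaHat_eq (hf : ContinuousOn f (Icc 0 T)) {t : ℝ} (ht : t ∈ Ico 0 T) :
    ∫ u in Ioc 0 t, betaHat T f u = (T - t) * ∫ u in Ioc 0 t, f u / (T - u) ^ 2 := by
  set G := fun s => ∫ u in 0..s, f u / (T - u) ^ 2
  have hfₜ : ContinuousOn f (Icc 0 t) := hf.mono (Icc_subset_Icc_right ht.2.le)
  have hG : ContinuousOn G (Icc 0 t) := by
    simpa only [uIcc_of_le ht.1] using
      continuousOn_integral_div_sub_sq (by rwa [uIcc_of_le ht.1]) (ht.1.trans_lt ht.2) ht.2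
  have hcont : ContinuousOn (fun u => f u / (T - u) - G u) (Icc 0 t) :=
    ContinuousOn.sub (by simpa only [pow_one] using
      continuousOn_div_sub_pow hfₜ (fun _ hu => hu.2.trans_lt ht.2) 1) hG
  calc ∫ u in Ioc 0 t, betaHat T f u = ∫ u in 0..t, (f u / (T - u) - G u) := by
        rw [intervalIntegral.integral_of_le ht.1]
        exact setIntegral_congr_fun measurableSet_Ioc fun u hu => betaHat_eq hu.1.le
    _ = (T - t) * G t - (T - 0) * G 0 := by
        refine intervalIntegral.integral_eq_sub_of_hasDerivAt_of_le (f := fun s => (T - s) * G s)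
          ht.1 ((continuousOn_const.sub continuousOn_id).mul hG) (fun x hx => ?_)
          (hcont.intervalIntegrable_of_Icc ht.1)
        have hxT : x < T := hx.2.trans ht.2
        refine (((hasDerivAt_id' x).const_sub T).fun_mul
          (hasDerivAt_integral_div_sub_sq hf ⟨hx.1, hxT⟩)).congr_deriv ?_
        field_simp [sub_ne_zero.mpr hxT.ne']
        ring
    _ = (T - t) * ∫ u in Ioc 0 t, f u / (T - u) ^ 2 := by
        simp [G, intervalIntegral.integral_of_le ht.1]

theorem abs_integral_div_sub_sq_le {s t c : ℝ} (hst : s ≤ t) (ht : t < T) (hc : 0 ≤ c)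
    (hg : ∀ u ∈ Ioc s t, |g u| ≤ c) :
    |∫ u in s..t, g u / (T - u) ^ 2| ≤ c / (T - t) := by
  have hs : s < T := hst.trans_lt ht
  have hbound : ∀ u ∈ Ioc s t, ‖g u / (T - u) ^ 2‖ ≤ c * (1 / (T - u) ^ 2) := fun u hu => by
    rw [Real.norm_eq_abs, abs_div, abs_of_pos (pow_pos (sub_pos.mpr (hu.2.trans_lt ht)) 2),
      mul_one_div]
    gcongr
    exact hg u hu
  calc |∫ u in s..t, g u / (T - u) ^ 2|
      ≤ ∫ u in s..t, c * (1 / (T - u) ^ 2) :=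
        intervalIntegral.norm_integral_le_of_norm_le hst (ae_of_all _ hbound)
          ((intervalIntegrable_div_sub_sq (f := fun _ => 1) continuousOn_const hs ht).const_mul c)
    _ = c * (1 / (T - t) - 1 / (T - s)) := by
        rw [intervalIntegral.integral_const_mul, integral_one_div_sub_sq hs ht]
    _ ≤ c / (T - t) := by
        rw [div_eq_mul_one_div c]
        gcongr
        exact sub_le_self _ (one_div_nonneg.mpr (sub_pos.mpr hs).le)

theorem tendsto_mul_integral_div_sub_sq_zero (hT : 0 < T) (hg : ContinuousOn g (Icc 0 T))
    (hgT : g T = 0) :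
    Tendsto (fun t => (T - t) * ∫ u in 0..t, g u / (T - u) ^ 2) (𝓝[<] T) (𝓝 0) := by
  rw [Metric.tendsto_nhds]
  intro ε hε
  -- Split `[0, t]` at a point `s` beyond which `|g| ≤ ε / 2`: the part on `[0, s]` contributes
  -- `(T - t) C → 0`, the part on `[s, t]` at most `ε / 2`.
  have hnear : ∀ᶠ u in 𝓝[≤] T, u ∈ Icc 0 T ∧ |g u| ≤ ε / 2 := by
    rw [← nhdsWithin_Icc_eq_nhdsLE hT]
    have hgT' : Tendsto g (𝓝[Icc 0 T] T) (𝓝 0) := hgT ▸ hg T ⟨hT.le, le_rfl⟩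
    refine eventually_mem_nhdsWithin.and <|
      (hgT'.eventually (Metric.closedBall_mem_nhds 0 (half_pos hε))).mono ?_
    intro u hu
    rwa [Real.dist_eq, sub_zero] at hu
  obtain ⟨s, hsT, hs⟩ := mem_nhdsLE_iff_exists_Icc_subset.mp hnear
  have hs0 : 0 ≤ s := (hs ⟨le_rfl, hsT.le⟩).1.1
  set C := ∫ u in 0..s, g u / (T - u) ^ 2
  have hC : Tendsto (fun t => (T - t) * C) (𝓝[<] T) (𝓝 0) :=
    (((continuous_const.sub continuous_id).mul continuous_const).tendsto' T 0 (by simp)).mono_left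
      nhdsWithin_le_nhds
  filter_upwards [Metric.tendsto_nhds.mp hC (ε / 2) (half_pos hε), Ioo_mem_nhdsLT hsT]
    with t htC hst
  have hsplit : ∫ u in 0..t, g u / (T - u) ^ 2 = C + ∫ u in s..t, g u / (T - u) ^ 2 := by
    refine (intervalIntegral.integral_add_adjacent_intervals
      (intervalIntegrable_div_sub_sq (hg.mono ?_) (hs0.trans_lt hsT) hsT)
      (intervalIntegrable_div_sub_sq (hg.mono ?_) hsT hst.2)).symm
    · rw [uIcc_of_le hs0]
      exact Icc_subset_Icc_right hsT.le
    · rw [uIcc_of_le hst.1.le]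
      exact Icc_subset_Icc hs0 hst.2.le
  have htail : |(T - t) * ∫ u in s..t, g u / (T - u) ^ 2| ≤ ε / 2 := by
    have hTt : 0 < T - t := sub_pos.mpr hst.2
    rw [abs_mul, abs_of_pos hTt]
    calc (T - t) * |∫ u in s..t, g u / (T - u) ^ 2| ≤ (T - t) * (ε / 2 / (T - t)) := by
          gcongr
          exact abs_integral_div_sub_sq_le hst.1.le hst.2 (half_pos hε).le
            fun u hu => (hs ⟨hu.1.le, hu.2.trans hst.2.le⟩).2
      _ = ε / 2 := mul_div_cancel₀ _ hTt.ne'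
  rw [Real.dist_eq, sub_zero] at htC ⊢
  rw [hsplit, mul_add]
  calc |(T - t) * C + (T - t) * ∫ u in s..t, g u / (T - u) ^ 2|
      ≤ |(T - t) * C| + |(T - t) * ∫ u in s..t, g u / (T - u) ^ 2| := abs_add_le _ _
    _ < ε := by linarith

theorem tendsto_mul_integral_div_sub_sq (hT : 0 < T) (hf : ContinuousOn f (Icc 0 T)) :
    Tendsto (fun t => (T - t) * ∫ u in 0..t, f u / (T - u) ^ 2) (𝓝[<] T) (𝓝 (f T)) := by
  have hzero := tendsto_mul_integral_div_sub_sq_zero (g := fun u => f u - f T) hT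
    (hf.sub continuousOn_const) (sub_self (f T))
  have hconst : Tendsto (fun t => f T * (1 - (T - t) / T)) (𝓝[<] T) (𝓝 (f T)) :=
    ((continuous_const.mul (continuous_const.sub
      ((continuous_const.sub continuous_id).div_const T))).tendsto' T (f T) (by simp)).mono_left
      nhdsWithin_le_nhds
  have hsum := hzero.add hconst
  rw [zero_add] at hsum
  refine hsum.congr' ?_
  filter_upwards [Ioo_mem_nhdsLT hT] with t ht
  have hsplit : ∀ u ∈ uIcc 0 t,
      f u / (T - u) ^ 2 = (f u - f T) / (T - u) ^ 2 + f T * (1 / (T - u) ^ 2) := fun u _ => by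
    ring
  have hft : ContinuousOn f (uIcc 0 t) := by
    rw [uIcc_of_le ht.1.le]
    exact hf.mono (Icc_subset_Icc_right ht.2.le)
  rw [intervalIntegral.integral_congr hsplit, intervalIntegral.integral_add
    (intervalIntegrable_div_sub_sq (f := fun u => f u - f T) (hft.sub continuousOn_const) hT ht.2)
    ((intervalIntegrable_div_sub_sq (f := fun _ => 1) continuousOn_const hT ht.2).const_mul _),
    intervalIntegral.integral_const_mul, integral_one_div_sub_sq hT ht.2]
  field_simp [(sub_pos.mpr ht.2).ne', hT.ne']
  ring

theorem tendsto_integral_betaHat (hT : 0 < T) (hf : ContinuousOn f (Icc 0 T)) :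
    Tendsto (fun t => ∫ u in Ioc 0 t, betaHat T f u) (𝓝[<] T) (𝓝 (f T)) := by
  refine (tendsto_mul_integral_div_sub_sq hT hf).congr' ?_
  filter_upwards [Ioo_mem_nhdsLT hT] with t ht
  rw [integral_betaHat_eq hf ⟨ht.1.le, ht.2⟩, intervalIntegral.integral_of_le ht.1.le]

theorem continuousOn_betaHat (hf : ContinuousOn f (Icc 0 T)) :
    ContinuousOn (betaHat T f) (Ioo 0 T) := by
  intro x hx
  have hquot : ContinuousAt (fun u => f u / (T - u)) x := by
    simpa only [pow_one] using (continuousOn_div_sub_pow (hf.mono Ioo_subset_Icc_self)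
      (fun _ hu => hu.2) 1).continuousAt (Ioo_mem_nhds hx.1 hx.2)
  exact (hquot.sub (hasDerivAt_integral_div_sub_sq hf hx).continuousAt).continuousWithinAt.congr
    (fun y hy => betaHat_eq hy.1.le) (betaHat_eq hx.1.le)

theorem integrableOn_betaHat (hf : ContinuousOn f (Icc 0 T))
    (hfin : ∫⁻ u in Ioc 0 T, ENNReal.ofReal |betaHat T f u| < ⊤) :
    IntegrableOn (betaHat T f) (Ioc 0 T) := by
  refine ⟨?_, by simpa only [HasFiniteIntegral, Real.enorm_eq_ofReal_abs] using hfin⟩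
  rw [← Measure.restrict_congr_set Ioo_ae_eq_Ioc]
  exact (continuousOn_betaHat hf).aestronglyMeasurable measurableSet_Ioo

end

theorem stmt0_general
    {Ω : Type*} {mΩ : MeasurableSpace Ω} (μ : Measure Ω) [IsProbabilityMeasure μ]
    (ℱ : Filtration ℝ mΩ) (T : ℝ) (hT : 0 < T)
    (ξ : Ω → ℝ) (hξ_int : Integrable ξ μ) (hξ_meas : StronglyMeasurable[ℱ T] ξ)
    (M : ℝ → Ω → ℝ)
    (hM_cont : ∀ᵐ ω ∂μ, ContinuousOn (fun t => M t ω) (Icc 0 T))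
    (hM_mod : ∀ t ∈ Icc (0:ℝ) T, M t =ᵐ[μ] μ[ξ|ℱ t])
    (βhat : ℝ → Ω → ℝ)
    (hβhat : ∀ t ω, βhat t ω = M t ω / (T - t) - ∫ u in Ioc (0:ℝ) t, M u ω / (T - u)^2) :
    (∀ᵐ ω ∂μ,
        (∀ t ∈ Ico (0:ℝ) T,
          ∫ u in Ioc (0:ℝ) t, βhat u ω
            = (T - t) * ∫ u in Ioc (0:ℝ) t, M u ω / (T - u)^2)
        ∧ Tendsto (fun t => ∫ u in Ioc (0:ℝ) t, βhat u ω) (𝓝[<] T) (𝓝 (ξ ω)))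
    ∧ ((∀ᵐ ω ∂μ, (∫⁻ u in Ioc (0:ℝ) T, ENNReal.ofReal |βhat u ω|) < ⊤) →
        ∀ᵐ ω ∂μ, ∫ u in Ioc (0:ℝ) T, βhat u ω = ξ ω) := by
  have hMT : M T =ᵐ[μ] ξ := by
    simpa only [condExp_of_stronglyMeasurable (ℱ.le T) hξ_meas hξ_int] using
      hM_mod T ⟨hT.le, le_rfl⟩
  obtain rfl : βhat = fun t ω => betaHat T (M · ω) t := funext₂ hβhat
  refine ⟨?_, fun hfin => ?_⟩
  · filter_upwards [hM_cont, hMT] with ω hω hωT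
    exact ⟨fun t ht => integral_betaHat_eq hω ht, hωT ▸ tendsto_integral_betaHat hT hω⟩
  · filter_upwards [hM_cont, hMT, hfin] with ω hω hωT hωfin
    exact hωT ▸ setIntegral_Ioc_eq_of_tendsto hT (integrableOn_betaHat hω hωfin)
      (tendsto_integral_betaHat hT hω)

theorem stmt0
    {Ω : Type*} {mΩ : MeasurableSpace Ω} (μ : Measure Ω) [IsProbabilityMeasure μ]
    (ℱ : Filtration ℝ mΩ) (T : ℝ) (hT : 0 < T)
    (ξ : Ω → ℝ) (hξ_int : Integrable ξ μ) (hξ_meas : StronglyMeasurable[ℱ T] ξ)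
    (M : ℝ → Ω → ℝ) (hM_adapted : Adapted ℱ M)
    (hM_cont : ∀ᵐ ω ∂μ, ContinuousOn (fun t => M t ω) (Icc 0 T))
    (hM_mod : ∀ t ∈ Icc (0:ℝ) T, M t =ᵐ[μ] μ[ξ|ℱ t])
    (βhat : ℝ → Ω → ℝ)
    (hβhat : ∀ t ω, βhat t ω = M t ω / (T - t) - ∫ u in Ioc (0:ℝ) t, M u ω / (T - u)^2) :
    (∀ᵐ ω ∂μ,
        (∀ t ∈ Ico (0:ℝ) T,
          ∫ u in Ioc (0:ℝ) t, βhat u ω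
            = (T - t) * ∫ u in Ioc (0:ℝ) t, M u ω / (T - u)^2)
        ∧ Tendsto (fun t => ∫ u in Ioc (0:ℝ) t, βhat u ω) (𝓝[<] T) (𝓝 (ξ ω)))
    ∧ ((∀ᵐ ω ∂μ, (∫⁻ u in Ioc (0:ℝ) T, ENNReal.ofReal |βhat u ω|) < ⊤) →
        ∀ᵐ ω ∂μ, ∫ u in Ioc (0:ℝ) T, βhat u ω = ξ ω) :=
  stmt0_general μ ℱ T hT ξ hξ_int hξ_meas M hM_cont hM_mod βhat hβhat
end

section
/- Let ξ ∈ L¹(P) be F_T-measurable, assume the martingale t ↦ E[ξ | F_t] admits a modification M with a.s. continuous paths, and let β̂_t = M_t/(T−t) − ∫₀^t M_u/(T−u)² du. If β* ∈ B^{2,1}(ξ) is such that the process (β*_t)_{t∈[0,T)} is a martingale with respect to (F_t) with a.s. continuous paths, then almost surely β*_t = β̂_t for all t ∈ [0,T); that is, β̂ is the unique martingale element of B^{2,1}(ξ) on [0,T). -/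
open MeasureTheory Filter Set
open scoped ENNReal Topology

/-- `β ∈ B^{2,1}(ξ)` : `β` is progressively measurable, `E[∫₀^T β_u² du] < ∞`,
and `∫₀^T β_u du = ξ` almost surely. -/
def MemB21 {Ω : Type*} {mΩ : MeasurableSpace Ω} (μ : Measure Ω) (ℱ : Filtration ℝ mΩ)
    (T : ℝ) (ξ : Ω → ℝ) (β : ℝ → Ω → ℝ) : Prop :=
  ProgMeasurable ℱ β ∧
  (∫⁻ ω, (∫⁻ u in Set.Ioc (0:ℝ) T, ENNReal.ofReal ((β u ω)^2)) ∂μ) < ⊤ ∧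
  ∀ᵐ ω ∂μ, ∫ u in Set.Ioc (0:ℝ) T, β u ω = ξ ω

/-!
Fix `t < T`. Splitting `ξ = ∫₀ᵗ β* + ∫ₜᵀ β*` and moving the conditional expectation inside
the second integral, the martingale property gives `E[∫ₜᵀ β*_u du | F_t] = (T - t) β*_t`, hence
`M_t = ∫₀ᵗ β*_u du + (T - t) β*_t` almost surely. Both sides are continuous in `t`, so checking
rational times yields a single null set off which the identity holds for all `t ∈ [0, T)`.
Pathwise, with `Y = ∫₀^· β*`, the identity says `(Y_s / (T - s))' = M_s / (T - s)²`, so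
`Y_t / (T - t) = ∫₀ᵗ M_u / (T - u)² du` and `β*_t = (M_t - Y_t) / (T - t) = β̂_t`.
-/

lemma eqOn_Ico_of_forall_ratCast_eq {E : Type*} [TopologicalSpace E] [T2Space E]
    {f g : ℝ → E} {a b : ℝ} (hf : ContinuousOn f (Ico a b)) (hg : ContinuousOn g (Ico a b))
    (h : ∀ q : ℚ, (q : ℝ) ∈ Ico a b → f q = g q) : EqOn f g (Ico a b) := by
  rcases le_or_gt b a with hba | hab
  · simp [Ico_eq_empty_of_le hba]
  refine EqOn.of_subset_closure (s := Ioo a b ∩ range ((↑) : ℚ → ℝ)) ?_ hf hg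
    (inter_subset_left.trans Ioo_subset_Ico_self) ?_
  · rintro _ ⟨hx, q, rfl⟩
    exact h q (Ioo_subset_Ico_self hx)
  · calc Ico a b ⊆ closure (Ioo a b) := by rw [closure_Ioo hab.ne]; exact Ico_subset_Icc_self
      _ ⊆ closure (Ioo a b ∩ range ((↑) : ℚ → ℝ)) :=
        closure_minimal (Rat.denseRange_cast.open_subset_closure_inter isOpen_Ioo) isClosed_closure

lemma eq_div_sub_integral_of_integral_add_mul_eq {b m : ℝ → ℝ} {a T : ℝ}
    (hb : ContinuousOn b (Ico a T))
    (hbm : ∀ s ∈ Ico a T, (∫ u in Ioc a s, b u) + (T - s) * b s = m s)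
    {t : ℝ} (ht : t ∈ Ico a T) :
    b t = m t / (T - t) - ∫ u in Ioc a t, m u / (T - u) ^ 2 := by
  set Y : ℝ → ℝ := fun s => ∫ u in Ioc a s, b u
  have hIcc : Icc a t ⊆ Ico a T := Icc_subset_Ico_right ht.2
  have hT : ∀ s ∈ Icc a t, T - s ≠ 0 := fun s hs => sub_ne_zero.2 (hIcc hs).2.ne'
  have hY : ContinuousOn Y (Icc a t) := intervalIntegral.continuousOn_primitive
    ((hb.mono hIcc).integrableOn_Icc)
  have hY' : ∀ y ∈ Ioo a t, HasDerivAt Y (b y) y := by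
    intro y hy
    have hyT : y ∈ Ioo a T := ⟨hy.1, hy.2.trans ht.2⟩
    have hcont : ContinuousOn b (Ioo a T) := hb.mono Ioo_subset_Ico_self
    refine (intervalIntegral.integral_hasDerivAt_right (f := b)
      ((hb.mono (Icc_subset_Ico_right hyT.2)).intervalIntegrable_of_Icc hy.1.le)
      (hcont.stronglyMeasurableAtFilter isOpen_Ioo y hyT)
      (hcont.continuousAt (isOpen_Ioo.mem_nhds hyT))).congr_of_eventuallyEq ?_
    filter_upwards [Ioi_mem_nhds hy.1] with s hs
    exact (intervalIntegral.integral_of_le hs.le).symm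
  have hm : ContinuousOn m (Icc a t) :=
    (hY.add ((continuousOn_const.sub continuousOn_id).mul (hb.mono hIcc))).congr
      fun s hs => (hbm s (hIcc hs)).symm
  have hFTC : ∫ u in a..t, m u / (T - u) ^ 2 = Y t / (T - t) - Y a / (T - a) := by
    refine intervalIntegral.integral_eq_sub_of_hasDerivAt_of_le ht.1
      (hY.div (continuousOn_const.sub continuousOn_id) hT) (fun y hy => ?_)
      ((hm.div ((continuousOn_const.sub continuousOn_id).pow 2)
        fun s hs => pow_ne_zero 2 (hT s hs)).intervalIntegrable_of_Icc ht.1)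
    have hTy := hT y (Ioo_subset_Icc_self hy)
    refine ((hY' y hy).div ((hasDerivAt_id y).const_sub T) hTy).congr_deriv ?_
    rw [← hbm y (hIcc (Ioo_subset_Icc_self hy)), id]
    field_simp
    ring
  rw [← intervalIntegral.integral_of_le ht.1, hFTC, ← hbm t ht]
  simp only [Y, Ioc_self, Measure.restrict_empty, integral_zero_measure, zero_div, sub_zero]
  field_simp [hT t (right_mem_Icc.2 ht.1)]
  ring

namespace MeasureTheory.IsStronglyProgressive

variable {Ω E : Type*} {mΩ : MeasurableSpace Ω} {ℱ : Filtration ℝ mΩ} {β : ℝ → Ω → E}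

lemma stronglyMeasurable_uncurry_min [TopologicalSpace E]
    (hβ : IsStronglyProgressive ℱ β) (t : ℝ) :
    StronglyMeasurable[MeasurableSpace.prod inferInstance (ℱ t)]
      fun p : ℝ × Ω => β (min p.1 t) p.2 := by
  let _ : MeasurableSpace Ω := ℱ t
  exact (hβ t).comp_measurable
    (g := fun p : ℝ × Ω => (⟨min p.1 t, mem_Iic.2 (min_le_right _ _)⟩, p.2))
    (((measurable_fst.min measurable_const).subtype_mk).prodMk measurable_snd)

lemma stronglyMeasurable_setIntegral
    [NormedAddCommGroup E] [NormedSpace ℝ E] (hβ : IsStronglyProgressive ℱ β)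
    {s : Set ℝ} (hs : MeasurableSet s) {t : ℝ} (hst : s ⊆ Iic t) :
    StronglyMeasurable[ℱ t] fun ω => ∫ u in s, β u ω := by
  have hmin : (fun ω => ∫ u in s, β u ω) = fun ω => ∫ u in s, β (min u t) ω :=
    funext fun ω => setIntegral_congr_fun hs fun u hu => by rw [min_eq_left (hst hu)]
  let _ : MeasurableSpace Ω := ℱ t
  rw [hmin]
  exact (hβ.stronglyMeasurable_uncurry_min t).integral_prod_left'

end MeasureTheory.IsStronglyProgressive

section Martingale

variable {Ω : Type*} {mΩ : MeasurableSpace Ω} {μ : Measure Ω} {ℱ : Filtration ℝ mΩ}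
  {β : ℝ → Ω → ℝ} {T : ℝ}

lemma MemB21.integrable_uncurry [IsFiniteMeasure μ] {ξ : Ω → ℝ} (hβ : MemB21 μ ℱ T ξ β) :
    Integrable (fun p : ℝ × Ω => β p.1 p.2) ((volume.restrict (Ioc 0 T)).prod μ) := by
  obtain ⟨hprog, hL2, -⟩ := hβ
  have hmeas : AEStronglyMeasurable (fun p : ℝ × Ω => β p.1 p.2)
      ((volume.restrict (Ioc 0 T)).prod μ) := by
    refine ⟨_, (hprog.stronglyMeasurable_uncurry_min T).mono
      (sup_le_sup_left (MeasurableSpace.comap_mono (ℱ.le T)) _), ?_⟩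
    rw [Measure.restrict_prod_eq_prod_univ]
    filter_upwards [ae_restrict_mem (measurableSet_Ioc.prod MeasurableSet.univ)] with p hp
    rw [min_eq_left hp.1.2]
  refine ((memLp_two_iff_integrable_sq hmeas).2 ⟨hmeas.pow 2, ?_⟩).integrable one_le_two
  refine (hasFiniteIntegral_iff_ofReal (Eventually.of_forall fun p => sq_nonneg _)).2 ?_
  rwa [lintegral_prod_symm _ (hmeas.aemeasurable.pow_const 2).ennreal_ofReal]

lemma MemB21.ae_integrableOn [IsFiniteMeasure μ] {ξ : Ω → ℝ} (hβ : MemB21 μ ℱ T ξ β) :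
    ∀ᵐ ω ∂μ, IntegrableOn (β · ω) (Ioc 0 T) :=
  hβ.integrable_uncurry.swap.prod_right_ae

lemma condExp_setIntegral_Ioc_ae_eq_mul [IsFiniteMeasure μ] {t : ℝ} (htT : t < T)
    (hint : Integrable (fun p : ℝ × Ω => β p.1 p.2) ((volume.restrict (Ioc t T)).prod μ))
    (hβint : ∀ u ∈ Ico t T, Integrable (β u) μ)
    (hmart : ∀ u ∈ Ico t T, μ[β u|ℱ t] =ᵐ[μ] β t) :
    μ[fun ω => ∫ u in Ioc t T, β u ω|ℱ t] =ᵐ[μ] fun ω => (T - t) * β t ω := by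
  have htt : t ∈ Ico t T := ⟨le_rfl, htT⟩
  refine (ae_eq_condExp_of_forall_setIntegral_eq (ℱ.le t) hint.integral_prod_right
    (fun s _ _ => ((hβint t htt).const_mul _).integrableOn) (fun s hs _ => ?_)
    ((stronglyMeasurable_condExp.aestronglyMeasurable.congr (hmart t htt)).const_mul _)).symm
  have hmart_s : ∀ u ∈ Ico t T, ∫ ω in s, β u ω ∂μ = ∫ ω in s, β t ω ∂μ := fun u hu => by
    rw [← setIntegral_condExp (ℱ.le t) (hβint u hu) hs]
    exact setIntegral_congr_ae (ℱ.le t s hs) ((hmart u hu).mono fun ω h _ => h)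
  calc ∫ ω in s, (T - t) * β t ω ∂μ
      = ∫ u in Ico t T, ∫ ω in s, β t ω ∂μ := by
        rw [integral_const_mul, setIntegral_const, measureReal_def, Real.volume_Ico,
          smul_eq_mul, ENNReal.toReal_ofReal (sub_nonneg.2 htT.le)]
    _ = ∫ u in Ico t T, ∫ ω in s, β u ω ∂μ :=
        (setIntegral_congr_fun measurableSet_Ico fun u hu => (hmart_s u hu)).symm
    _ = ∫ u in Ioc t T, ∫ ω in s, β u ω ∂μ := setIntegral_congr_set Ico_ae_eq_Ioc
    _ = ∫ ω in s, (∫ u in Ioc t T, β u ω) ∂μ :=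
        integral_integral_swap
          (hint.mono_measure (Measure.prod_mono le_rfl Measure.restrict_le_self))

lemma MemB21.integral_Ioc_add_mul_ae_eq_condExp [IsFiniteMeasure μ] {ξ : Ω → ℝ}
    (hβ : MemB21 μ ℱ T ξ β) {t : ℝ} (ht0 : 0 ≤ t) (htT : t < T)
    (hβint : ∀ u ∈ Ico t T, Integrable (β u) μ)
    (hmart : ∀ u ∈ Ico t T, μ[β u|ℱ t] =ᵐ[μ] β t) :
    (fun ω => (∫ u in Ioc 0 t, β u ω) + (T - t) * β t ω) =ᵐ[μ] μ[ξ|ℱ t] := by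
  have hint := hβ.integrable_uncurry
  have hint_on : ∀ s ⊆ Ioc 0 T,
      Integrable (fun p : ℝ × Ω => β p.1 p.2) ((volume.restrict s).prod μ) := fun s hs =>
    hint.mono_measure (Measure.prod_mono (Measure.restrict_mono hs le_rfl) le_rfl)
  have hsub_left : Ioc 0 t ⊆ Ioc 0 T := Ioc_subset_Ioc_right htT.le
  have hsub_right : Ioc t T ⊆ Ioc 0 T := Ioc_subset_Ioc_left ht0
  set Y := fun ω => ∫ u in Ioc 0 t, β u ω
  set Z := fun ω => ∫ u in Ioc t T, β u ω
  have hYint : Integrable Y μ := (hint_on _ hsub_left).integral_prod_right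
  have hZint : Integrable Z μ := (hint_on _ hsub_right).integral_prod_right
  have hY : μ[Y|ℱ t] = Y := condExp_of_stronglyMeasurable (ℱ.le t)
    (hβ.1.stronglyMeasurable_setIntegral measurableSet_Ioc Ioc_subset_Iic_self) hYint
  have hsplit : ξ =ᵐ[μ] Y + Z := by
    filter_upwards [hβ.2.2, hβ.ae_integrableOn] with ω hξ hω
    rw [← hξ, ← Ioc_union_Ioc_eq_Ioc ht0 htT.le, setIntegral_union
      (Ioc_disjoint_Ioc_of_le le_rfl) measurableSet_Ioc (hω.mono_set hsub_left)
      (hω.mono_set hsub_right)]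
    rfl
  calc (fun ω => Y ω + (T - t) * β t ω) =ᵐ[μ] μ[Y|ℱ t] + μ[Z|ℱ t] := by
        rw [hY]
        exact EventuallyEq.rfl.add (condExp_setIntegral_Ioc_ae_eq_mul htT
          (hint_on _ hsub_right) hβint hmart).symm
    _ =ᵐ[μ] μ[Y + Z|ℱ t] := (condExp_add hYint hZint _).symm
    _ =ᵐ[μ] μ[ξ|ℱ t] := condExp_congr_ae hsplit.symm

end Martingale

theorem stmt3_general
    {Ω : Type*} {mΩ : MeasurableSpace Ω} (μ : Measure Ω) [IsProbabilityMeasure μ]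
    (ℱ : Filtration ℝ mΩ) (T : ℝ)
    (ξ : Ω → ℝ)
    (M : ℝ → Ω → ℝ)
    (hM_cont : ∀ᵐ ω ∂μ, ContinuousOn (fun t => M t ω) (Icc 0 T))
    (hM_mod : ∀ t ∈ Icc (0:ℝ) T, M t =ᵐ[μ] μ[ξ|ℱ t])
    (βhat : ℝ → Ω → ℝ)
    (hβhat : ∀ t ω, βhat t ω = M t ω / (T - t) - ∫ u in Ioc (0:ℝ) t, M u ω / (T - u)^2)
    -- `β*` is an element of `B^{2,1}(ξ)` ...
    (βstar : ℝ → Ω → ℝ) (hβstar_mem : MemB21 μ ℱ T ξ βstar)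
    -- ... which is a martingale on `[0,T)` with a.s. continuous paths:
    (hβstar_cont : ∀ᵐ ω ∂μ, ContinuousOn (fun t => βstar t ω) (Ico 0 T))
    (hβstar_int : ∀ t ∈ Ico (0:ℝ) T, Integrable (βstar t) μ)
    (hβstar_mart : ∀ s t : ℝ, 0 ≤ s → s ≤ t → t < T → μ[βstar t|ℱ s] =ᵐ[μ] βstar s) :
    ∀ᵐ ω ∂μ, ∀ t ∈ Ico (0:ℝ) T, βstar t ω = βhat t ω := by
  have hrat : ∀ᵐ ω ∂μ, ∀ q : ℚ, (q : ℝ) ∈ Ico 0 T →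
      (∫ u in Ioc 0 (q : ℝ), βstar u ω) + (T - q) * βstar q ω = M q ω := by
    refine ae_all_iff.2 fun q => ?_
    by_cases hq : (q : ℝ) ∈ Ico 0 T
    · filter_upwards [hβstar_mem.integral_Ioc_add_mul_ae_eq_condExp hq.1 hq.2
        (fun u hu => hβstar_int u ⟨hq.1.trans hu.1, hu.2⟩)
        (fun u hu => hβstar_mart q u hq.1 hu.1 hu.2), hM_mod q (Ico_subset_Icc_self hq)]
        with ω h h' _ using h.trans h'.symm
    · exact Eventually.of_forall fun ω h => absurd h hq
  filter_upwards [hM_cont, hβstar_cont, hβstar_mem.ae_integrableOn, hrat]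
    with ω hM hβ hβint hq t ht
  have hY : ContinuousOn (fun s => ∫ u in Ioc 0 s, βstar u ω) (Ico 0 T) :=
    (intervalIntegral.continuousOn_primitive
      (hβint.congr_set_ae Ioc_ae_eq_Icc.symm)).mono Ico_subset_Icc_self
  have hid := eqOn_Ico_of_forall_ratCast_eq
    (hY.add ((continuousOn_const.sub continuousOn_id).mul hβ)) (hM.mono Ico_subset_Icc_self) hq
  rw [hβhat]
  exact eq_div_sub_integral_of_integral_add_mul_eq hβ hid ht

theorem stmt3
    {Ω : Type*} {mΩ : MeasurableSpace Ω} (μ : Measure Ω) [IsProbabilityMeasure μ]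
    (ℱ : Filtration ℝ mΩ) (T : ℝ) (hT : 0 < T)
    (ξ : Ω → ℝ) (hξ_int : Integrable ξ μ) (hξ_meas : StronglyMeasurable[ℱ T] ξ)
    (M : ℝ → Ω → ℝ) (hM_adapted : Adapted ℱ M)
    (hM_cont : ∀ᵐ ω ∂μ, ContinuousOn (fun t => M t ω) (Icc 0 T))
    (hM_mod : ∀ t ∈ Icc (0:ℝ) T, M t =ᵐ[μ] μ[ξ|ℱ t])
    (βhat : ℝ → Ω → ℝ)
    (hβhat : ∀ t ω, βhat t ω = M t ω / (T - t) - ∫ u in Ioc (0:ℝ) t, M u ω / (T - u)^2)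
    -- `β*` is an element of `B^{2,1}(ξ)` ...
    (βstar : ℝ → Ω → ℝ) (hβstar_mem : MemB21 μ ℱ T ξ βstar)
    -- ... which is a martingale on `[0,T)` with a.s. continuous paths:
    (hβstar_adapted : Adapted ℱ βstar)
    (hβstar_cont : ∀ᵐ ω ∂μ, ContinuousOn (fun t => βstar t ω) (Ico 0 T))
    (hβstar_int : ∀ t ∈ Ico (0:ℝ) T, Integrable (βstar t) μ)
    (hβstar_mart : ∀ s t : ℝ, 0 ≤ s → s ≤ t → t < T → μ[βstar t|ℱ s] =ᵐ[μ] βstar s) :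
    ∀ᵐ ω ∂μ, ∀ t ∈ Ico (0:ℝ) T, βstar t ω = βhat t ω :=
  stmt3_general μ ℱ T ξ M hM_cont hM_mod βhat hβhat βstar hβstar_mem hβstar_cont hβstar_int
    hβstar_mart
end

section
/- Let T > 0 and let h : [0,T) → ℝ be continuous. If ∫₀^t h(u) du + (T−t)·h(t) = 0 for every t ∈ [0,T), then h(t) = 0 for all t ∈ [0,T). Consequently, a continuous solution of the Volterra equation β_t·(T−t) = m_t − ∫₀^t β_u du on [0,T), for a given continuous m, is unique. -/
/-! With `F t = ∫₀ᵗ h`, the hypothesis reads `F + (T - t) F' = 0`, which says exactly that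
`F t / (T - t)` has zero derivative. This quotient therefore keeps its value `F 0 / T = 0`,
so `F` vanishes on `[0, T)` and then so does `h = -F / (T - t)`. Uniqueness for the Volterra
equation follows by applying this to the difference of two solutions. -/

open MeasureTheory Set Topology intervalIntegral

theorem hasDerivWithinAt_div_sub_zero_of_add_sub_mul_eq_zero {F : ℝ → ℝ} {F' T s : ℝ}
    {S : Set ℝ} (hF : HasDerivWithinAt F F' S s) (hs : s ≠ T) (h : F s + (T - s) * F' = 0) :
    HasDerivWithinAt (fun x => F x / (T - x)) 0 S s := by
  have hquot : HasDerivWithinAt (fun x => F x / (T - x))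
      ((F' * (T - s) - F s * -1) / (T - s) ^ 2) S s :=
    hF.div ((hasDerivWithinAt_id s S).const_sub T) (sub_ne_zero.mpr hs.symm)
  have hnum : F' * (T - s) - F s * -1 = 0 := by linear_combination h
  rwa [hnum, zero_div] at hquot

theorem eqOn_zero_of_add_sub_mul_eq_zero {F f : ℝ → ℝ} {a b T : ℝ} (hbT : b < T)
    (hc : ContinuousOn F (Icc a b)) (hd : ∀ s ∈ Ico a b, HasDerivWithinAt F (f s) (Ici s) s)
    (heq : ∀ s ∈ Ico a b, F s + (T - s) * f s = 0) (ha : F a = 0) :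
    EqOn F 0 (Icc a b) := by
  have hTne : ∀ s ∈ Icc a b, T - s ≠ 0 := fun s hs => sub_ne_zero.mpr (hs.2.trans_lt hbT).ne'
  have hconst := constant_of_has_deriv_right_zero (f := fun x => F x / (T - x))
    (hc.div (continuousOn_const.sub continuousOn_id) hTne)
    fun s hs => hasDerivWithinAt_div_sub_zero_of_add_sub_mul_eq_zero (hd s hs)
      (hs.2.trans hbT).ne (heq s hs)
  intro s hs
  have hquot : F s / (T - s) = 0 := by simpa [ha] using hconst s hs
  simpa [hTne s hs] using hquot

theorem hasDerivWithinAt_integral_Ici_of_continuousOn_Ico {h : ℝ → ℝ} {a T s : ℝ}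
    (hc : ContinuousOn h (Ico a T)) (hs : s ∈ Ico a T) :
    HasDerivWithinAt (fun x => ∫ u in a..x, h u) (h s) (Ici s) s := by
  have hnhds : Ico a T ∈ 𝓝[>] s := Ico_mem_nhdsGT_of_mem hs
  refine integral_hasDerivWithinAt_right (t := Ioi s) ?_
    ⟨Ico a T, hnhds, hc.aestronglyMeasurable measurableSet_Ico⟩
    ((hc s hs).mono_of_mem_nhdsWithin hnhds)
  refine (hc.mono ?_).intervalIntegrable
  rw [uIcc_of_le hs.1]
  exact Icc_subset_Ico_right hs.2

theorem eqOn_zero_of_integral_add_sub_mul_eq_zero {h : ℝ → ℝ} {a T : ℝ}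
    (hc : ContinuousOn h (Ico a T))
    (heq : ∀ t ∈ Ico a T, (∫ u in Ioc a t, h u) + (T - t) * h t = 0) :
    EqOn h 0 (Ico a T) := by
  intro t ht
  have hsub : Icc a t ⊆ Ico a T := Icc_subset_Ico_right ht.2
  have heq' : ∀ s ∈ Icc a t, (∫ u in a..s, h u) + (T - s) * h s = 0 := fun s hs => by
    rw [integral_of_le hs.1]
    exact heq s (hsub hs)
  have hcF : ContinuousOn (fun x => ∫ u in a..x, h u) (Icc a t) := by
    rw [← uIcc_of_le ht.1]
    refine continuousOn_primitive_interval ?_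
    rw [uIcc_of_le ht.1]
    exact (hc.mono hsub).integrableOn_Icc
  have hF : EqOn (fun x => ∫ u in a..x, h u) 0 (Icc a t) :=
    eqOn_zero_of_add_sub_mul_eq_zero ht.2 hcF
      (fun s hs => hasDerivWithinAt_integral_Ici_of_continuousOn_Ico hc
        (hsub (Ico_subset_Icc_self hs)))
      (fun s hs => heq' s (Ico_subset_Icc_self hs)) integral_same
  have htt : t ∈ Icc a t := right_mem_Icc.mpr ht.1
  have hprod : (T - t) * h t = 0 := by simpa [hF htt] using heq' t htt
  exact (mul_eq_zero.mp hprod).resolve_left (sub_ne_zero.mpr ht.2.ne')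

theorem eqOn_of_mul_sub_eq_sub_integral {m β₁ β₂ : ℝ → ℝ} {a T : ℝ}
    (hβ₁ : ContinuousOn β₁ (Ico a T)) (hβ₂ : ContinuousOn β₂ (Ico a T))
    (he₁ : ∀ t ∈ Ico a T, β₁ t * (T - t) = m t - ∫ u in Ioc a t, β₁ u)
    (he₂ : ∀ t ∈ Ico a T, β₂ t * (T - t) = m t - ∫ u in Ioc a t, β₂ u) :
    EqOn β₁ β₂ (Ico a T) := by
  have hint : ∀ {β : ℝ → ℝ}, ContinuousOn β (Ico a T) → ∀ t ∈ Ico a T,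
      IntegrableOn β (Ioc a t) := fun hβ t ht =>
    ((hβ.mono (Icc_subset_Ico_right ht.2)).integrableOn_Icc).mono_set Ioc_subset_Icc_self
  have hdiff := eqOn_zero_of_integral_add_sub_mul_eq_zero (hβ₁.sub hβ₂) fun t ht => by
    simp only [Pi.sub_apply]
    rw [integral_sub (hint hβ₁ t ht) (hint hβ₂ t ht)]
    linear_combination he₁ t ht - he₂ t ht
  exact fun t ht => sub_eq_zero.mp (hdiff ht)

theorem stmt9_general (T : ℝ) :
    (∀ h : ℝ → ℝ, ContinuousOn h (Ico 0 T) →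
      (∀ t ∈ Ico (0:ℝ) T, (∫ u in Ioc (0:ℝ) t, h u) + (T - t) * h t = 0) →
      ∀ t ∈ Ico (0:ℝ) T, h t = 0) ∧
    -- consequently, continuous solutions of the Volterra equation
    -- `β_t (T - t) = m_t - ∫₀^t β_u du` on `[0,T)` are unique:
    (∀ m β₁ β₂ : ℝ → ℝ, ContinuousOn m (Ico 0 T) →
      ContinuousOn β₁ (Ico 0 T) → ContinuousOn β₂ (Ico 0 T) →
      (∀ t ∈ Ico (0:ℝ) T, β₁ t * (T - t) = m t - ∫ u in Ioc (0:ℝ) t, β₁ u) →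
      (∀ t ∈ Ico (0:ℝ) T, β₂ t * (T - t) = m t - ∫ u in Ioc (0:ℝ) t, β₂ u) →
      ∀ t ∈ Ico (0:ℝ) T, β₁ t = β₂ t) :=
  ⟨fun _ hc heq _ ht => eqOn_zero_of_integral_add_sub_mul_eq_zero hc heq ht,
    fun _ _ _ _ hβ₁ hβ₂ he₁ he₂ _ ht => eqOn_of_mul_sub_eq_sub_integral hβ₁ hβ₂ he₁ he₂ ht⟩

theorem stmt9 (T : ℝ) (hT : 0 < T) :
    (∀ h : ℝ → ℝ, ContinuousOn h (Ico 0 T) →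
      (∀ t ∈ Ico (0:ℝ) T, (∫ u in Ioc (0:ℝ) t, h u) + (T - t) * h t = 0) →
      ∀ t ∈ Ico (0:ℝ) T, h t = 0) ∧
    -- consequently, continuous solutions of the Volterra equation
    -- `β_t (T - t) = m_t - ∫₀^t β_u du` on `[0,T)` are unique:
    (∀ m β₁ β₂ : ℝ → ℝ, ContinuousOn m (Ico 0 T) →
      ContinuousOn β₁ (Ico 0 T) → ContinuousOn β₂ (Ico 0 T) →
      (∀ t ∈ Ico (0:ℝ) T, β₁ t * (T - t) = m t - ∫ u in Ioc (0:ℝ) t, β₁ u) →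
      (∀ t ∈ Ico (0:ℝ) T, β₂ t * (T - t) = m t - ∫ u in Ioc (0:ℝ) t, β₂ u) →
      ∀ t ∈ Ico (0:ℝ) T, β₁ t = β₂ t) :=
  stmt9_general T
end

section
/- Let β be a progressively measurable process with E[∫₀^T β_u² du] < ∞ and set A_t = ∫₀^t β_u du for t ∈ [0,T]. Assume that E[∫₀^T β_u · γ_u du] = 0 for every progressively measurable γ with E[∫₀^T γ_u² du] < ∞ and ∫₀^T γ_u du = 0 a.s. Then for all 0 ≤ t < s < T, one has E[(A_s − A_t)/(s−t) | F_t] = E[(A_T − A_s)/(T−s) | F_t] almost surely. -/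
/-!
Fix `E ∈ ℱ t` and let `c` be `1/(s-t)` on `(t, s]` and `-1/(T-s)` on `(s, T]`. The process
`γ_u = c(u) 1_E` is an admissible test process: it is bounded, progressive because `c` vanishes up
to time `t`, and `∫₀^T c = 0`. Since `∫₀^T β_u c(u) du` is the difference of the two average slopes,
orthogonality says that this difference integrates to zero over every `E ∈ ℱ t`, which is exactly
the equality of the two conditional expectations. The integrability needed along the way comes from
`β ∈ L²(Ω × (0, T])` via Fubini.
-/

open MeasureTheory Set

namespace MeasureTheory

variable {Ω : Type*} {mΩ : MeasurableSpace Ω}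

theorem IsStronglyProgressive.stronglyMeasurable_uncurry_min_s19 {E : Type*} [TopologicalSpace E]
    {ℱ : Filtration ℝ mΩ} {β : ℝ → Ω → E} (hβ : IsStronglyProgressive ℱ β) (T : ℝ) :
    StronglyMeasurable (fun p : Ω × ℝ => β (min p.2 T) p.1) := by
  have hφ : @Measurable _ _ _ (Subtype.instMeasurableSpace.prod (ℱ T))
      (fun p : Ω × ℝ => ((⟨min p.2 T, mem_Iic.2 (min_le_right _ _)⟩ : Iic T), p.1)) :=
    (measurable_snd.min measurable_const).subtype_mk.prodMk (measurable_fst.mono le_rfl (ℱ.le T))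
  exact (hβ T).comp_measurable hφ

theorem IsStronglyProgressive.aestronglyMeasurable_prod_restrict {E : Type*} [TopologicalSpace E]
    {ℱ : Filtration ℝ mΩ} {β : ℝ → Ω → E} {T : ℝ} (hβ : IsStronglyProgressive ℱ β)
    (μ : Measure Ω) [SFinite μ] (ν : Measure ℝ) [SFinite ν] {S : Set ℝ} (hS : MeasurableSet S)
    (hST : S ⊆ Iic T) :
    AEStronglyMeasurable (fun p : Ω × ℝ => β p.2 p.1) (μ.prod (ν.restrict S)) := by
  refine (hβ.stronglyMeasurable_uncurry_min_s19 T).aestronglyMeasurable.congr ?_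
  rw [← Measure.restrict_univ (μ := μ), Measure.prod_restrict]
  filter_upwards [ae_restrict_mem (MeasurableSet.univ.prod hS)] with p hp
  rw [min_eq_left (hST hp.2)]

theorem integrable_prod_of_lintegral_lintegral_sq_lt_top {α γ : Type*} [MeasurableSpace α]
    [MeasurableSpace γ] {μ : Measure α} {ν : Measure γ} [IsFiniteMeasure μ] [IsFiniteMeasure ν]
    {F : α × γ → ℝ} (hF : AEStronglyMeasurable F (μ.prod ν))
    (h : ∫⁻ x, ∫⁻ y, ENNReal.ofReal (F (x, y) ^ 2) ∂ν ∂μ < ⊤) : Integrable F (μ.prod ν) := by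
  refine ((memLp_two_iff_integrable_sq hF).2 ⟨hF.pow 2, ?_⟩).integrable one_le_two
  rw [hasFiniteIntegral_iff_ofReal (ae_of_all _ fun _ => sq_nonneg _),
    lintegral_prod _ (hF.aemeasurable.pow_const 2).ennreal_ofReal]
  exact h

theorem Integrable.integrable_setIntegral_prod_restrict {α γ E : Type*} [MeasurableSpace α]
    [MeasurableSpace γ] [NormedAddCommGroup E] [NormedSpace ℝ E] {μ : Measure α} {ν : Measure γ}
    [SFinite μ] [SFinite ν] {F : α × γ → E} {S S' : Set γ}
    (hF : Integrable F (μ.prod (ν.restrict S))) (hS' : S' ⊆ S) :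
    Integrable (fun x => ∫ y in S', F (x, y) ∂ν) μ := by
  have : Integrable F (μ.prod (ν.restrict S')) := by
    rw [← Measure.restrict_univ (μ := μ), Measure.prod_restrict] at hF ⊢
    exact IntegrableOn.mono_set hF (prod_mono subset_rfl hS')
  exact this.integral_prod_left

theorem lintegral_lintegral_sq_lt_top_of_abs_le {α : Type*} [MeasurableSpace α] (μ : Measure Ω)
    (ν : Measure α) [IsFiniteMeasure μ] [IsFiniteMeasure ν] {γ : α → Ω → ℝ} {C : ℝ}
    (hγ : ∀ u ω, |γ u ω| ≤ C) :
    ∫⁻ ω, ∫⁻ u, ENNReal.ofReal (γ u ω ^ 2) ∂ν ∂μ < ⊤ := by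
  calc ∫⁻ ω, ∫⁻ u, ENNReal.ofReal (γ u ω ^ 2) ∂ν ∂μ
      ≤ ∫⁻ _, ∫⁻ _, ENNReal.ofReal (C ^ 2) ∂ν ∂μ := by
        refine lintegral_mono fun ω => lintegral_mono fun u => ENNReal.ofReal_le_ofReal ?_
        exact sq_le_sq' (abs_le.1 (hγ u ω)).1 (abs_le.1 (hγ u ω)).2
    _ < ⊤ := by simp [ENNReal.mul_lt_top, measure_lt_top]

theorem condExp_ae_eq_of_forall_setIntegral_eq {μ : Measure Ω} {m : MeasurableSpace Ω}
    (hm : m ≤ mΩ) [SigmaFinite (μ.trim hm)] {f g : Ω → ℝ} (hf : Integrable f μ)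
    (hg : Integrable g μ) (hfg : ∀ E, MeasurableSet[m] E → ∫ ω in E, f ω ∂μ = ∫ ω in E, g ω ∂μ) :
    μ[f | m] =ᵐ[μ] μ[g | m] := by
  refine (ae_eq_condExp_of_forall_setIntegral_eq hm hf
    (fun _ _ _ => integrable_condExp.integrableOn) (fun E hE _ => ?_)
    stronglyMeasurable_condExp.aestronglyMeasurable).symm
  rw [setIntegral_condExp hm hg hE, hfg E hE]

theorem isStronglyProgressive_mul_indicator {ι : Type*} [LinearOrder ι] [MeasurableSpace ι]
    {ℱ : Filtration ι mΩ} {c : ι → ℝ} (hc : Measurable c) {t : ι} (hc0 : ∀ u ≤ t, c u = 0)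
    {E : Set Ω} (hE : MeasurableSet[ℱ t] E) :
    IsStronglyProgressive ℱ (fun u ω => c u * E.indicator 1 ω) := by
  intro r
  rcases le_total t r with htr | hrt
  · exact (hc.stronglyMeasurable.comp_measurable (measurable_subtype_coe.comp measurable_fst)).mul
      ((stronglyMeasurable_const.indicator (ℱ.mono htr _ hE)).comp_measurable measurable_snd)
  · have : (fun p : Iic r × Ω => c p.1 * E.indicator 1 p.2) = 0 :=
      funext fun p => by simp [hc0 _ (p.1.2.trans hrt)]
    rw [this]
    exact stronglyMeasurable_zero

end MeasureTheory

theorem setIntegral_Ioc_sub_setIntegral_Ioc {E : Type*} [NormedAddCommGroup E] [NormedSpace ℝ E]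
    {μ : Measure ℝ} {f : ℝ → E} {a b c : ℝ} (hab : a ≤ b) (hbc : b ≤ c)
    (hf : IntegrableOn f (Ioc a c) μ) :
    ∫ x in Ioc a c, f x ∂μ - ∫ x in Ioc a b, f x ∂μ = ∫ x in Ioc b c, f x ∂μ := by
  have h := setIntegral_union (Ioc_disjoint_Ioc_of_le le_rfl) measurableSet_Ioc
    (hf.mono_set (Ioc_subset_Ioc_right hbc)) (hf.mono_set (Ioc_subset_Ioc_left hab))
  rw [Ioc_union_Ioc_eq_Ioc hab hbc] at h
  rw [h, add_sub_cancel_left]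

theorem abs_mul_indicator_one_le {α : Type*} (a : ℝ) (E : Set α) (x : α) :
    |a * E.indicator 1 x| ≤ |a| := by
  by_cases hx : x ∈ E <;> simp [hx]

-- The weight `c` of the argument above.
noncomputable def slopeContrast (t s T : ℝ) : ℝ → ℝ :=
  (Ioc t s).indicator (fun _ => (s - t)⁻¹) - (Ioc s T).indicator (fun _ => (T - s)⁻¹)

section slopeContrast

variable {t s T : ℝ}

theorem measurable_slopeContrast : Measurable (slopeContrast t s T) :=
  (measurable_const.indicator measurableSet_Ioc).sub (measurable_const.indicator measurableSet_Ioc)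

theorem slopeContrast_of_le {u : ℝ} (hut : u ≤ t) (hts : t ≤ s) : slopeContrast t s T u = 0 := by
  have h₁ : u ∉ Ioc t s := fun h => h.1.not_ge hut
  have h₂ : u ∉ Ioc s T := fun h => h.1.not_ge (hut.trans hts)
  simp [slopeContrast, h₁, h₂]

theorem abs_slopeContrast_le (hts : t ≤ s) (hsT : s ≤ T) (u : ℝ) :
    |slopeContrast t s T u| ≤ (s - t)⁻¹ + (T - s)⁻¹ := by
  have h₁ : 0 ≤ (s - t)⁻¹ := inv_nonneg.2 (sub_nonneg.2 hts)
  have h₂ : 0 ≤ (T - s)⁻¹ := inv_nonneg.2 (sub_nonneg.2 hsT)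
  refine (abs_sub _ _).trans (add_le_add ?_ ?_) <;>
  · rw [indicator_apply]
    split_ifs <;> simp [abs_of_nonneg, *]

theorem setIntegral_mul_slopeContrast {a : ℝ} {h : ℝ → ℝ} (hat : a ≤ t) (hts : t ≤ s)
    (hsT : s ≤ T) (hh : IntegrableOn h (Ioc a T)) :
    ∫ u in Ioc a T, h u * slopeContrast t s T u =
      ((∫ u in Ioc a s, h u) - ∫ u in Ioc a t, h u) / (s - t) -
        ((∫ u in Ioc a T, h u) - ∫ u in Ioc a s, h u) / (T - s) := by
  have has : a ≤ s := hat.trans hts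
  have hmul : ∀ u, h u * slopeContrast t s T u =
      (Ioc t s).indicator (fun u => h u * (s - t)⁻¹) u -
        (Ioc s T).indicator (fun u => h u * (T - s)⁻¹) u := by
    intro u
    simp only [slopeContrast, Pi.sub_apply, indicator_apply]
    split_ifs <;> ring
  have hts_int : IntegrableOn h (Ioc t s) := hh.mono_set (Ioc_subset_Ioc hat hsT)
  have hsT_int : IntegrableOn h (Ioc s T) := hh.mono_set (Ioc_subset_Ioc has le_rfl)
  simp_rw [hmul]
  rw [integral_sub
      (IntegrableOn.integrable_indicator (hts_int.mul_const _) measurableSet_Ioc).integrableOn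
      (IntegrableOn.integrable_indicator (hsT_int.mul_const _) measurableSet_Ioc).integrableOn,
    setIntegral_indicator measurableSet_Ioc, setIntegral_indicator measurableSet_Ioc,
    inter_eq_right.2 (Ioc_subset_Ioc hat hsT), inter_eq_right.2 (Ioc_subset_Ioc has le_rfl),
    integral_mul_const, integral_mul_const,
    setIntegral_Ioc_sub_setIntegral_Ioc hat hts (hh.mono_set (Ioc_subset_Ioc_right hsT)),
    setIntegral_Ioc_sub_setIntegral_Ioc has hsT hh, div_eq_mul_inv, div_eq_mul_inv]

theorem setIntegral_slopeContrast {a : ℝ} (hat : a ≤ t) (hts : t < s) (hsT : s < T) :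
    ∫ u in Ioc a T, slopeContrast t s T u = 0 := by
  have := setIntegral_mul_slopeContrast hat hts.le hsT.le
    (integrableOn_const (C := (1 : ℝ)) measure_Ioc_lt_top.ne)
  simp only [one_mul] at this
  rw [this]
  simp [hat, hat.trans hts.le, hat.trans (hts.trans hsT).le, div_self (sub_ne_zero.2 hts.ne'),
    div_self (sub_ne_zero.2 hsT.ne')]

end slopeContrast

theorem stmt19_general
    {Ω : Type*} {mΩ : MeasurableSpace Ω} (μ : Measure Ω) [IsProbabilityMeasure μ]
    (ℱ : Filtration ℝ mΩ) (T : ℝ)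
    (β : ℝ → Ω → ℝ) (hβ_prog : ProgMeasurable ℱ β)
    (hβ_fin : (∫⁻ ω, (∫⁻ u in Ioc (0:ℝ) T, ENNReal.ofReal ((β u ω)^2)) ∂μ) < ⊤)
    -- `A_t = ∫₀^t β_u du`
    (A : ℝ → Ω → ℝ) (hA : ∀ t ω, A t ω = ∫ u in Ioc (0:ℝ) t, β u ω)
    -- orthogonality: `E[∫₀^T β_u γ_u du] = 0` for every progressively measurable `γ`
    -- with `E[∫₀^T γ_u² du] < ∞` and `∫₀^T γ_u du = 0` a.s.
    (horth : ∀ γ : ℝ → Ω → ℝ, ProgMeasurable ℱ γ →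
      (∫⁻ ω, (∫⁻ u in Ioc (0:ℝ) T, ENNReal.ofReal ((γ u ω)^2)) ∂μ) < ⊤ →
      (∀ᵐ ω ∂μ, ∫ u in Ioc (0:ℝ) T, γ u ω = 0) →
      (∫ ω, (∫ u in Ioc (0:ℝ) T, β u ω * γ u ω) ∂μ) = 0) :
    ∀ s t : ℝ, 0 ≤ t → t < s → s < T →
      μ[fun ω => (A s ω - A t ω) / (s - t)|ℱ t]
        =ᵐ[μ] μ[fun ω => (A T ω - A s ω) / (T - s)|ℱ t] := by
  intro s t ht hts hsT
  have hβ : Integrable (fun p : Ω × ℝ => β p.2 p.1) (μ.prod (volume.restrict (Ioc 0 T))) :=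
    integrable_prod_of_lintegral_lintegral_sq_lt_top
      (IsStronglyProgressive.aestronglyMeasurable_prod_restrict hβ_prog μ volume measurableSet_Ioc
        fun _ hu => hu.2) hβ_fin
  have hA_int : ∀ r ≤ T, Integrable (A r) μ := fun r hr => by
    simpa only [← hA] using hβ.integrable_setIntegral_prod_restrict (Ioc_subset_Ioc_right hr)
  set f := fun ω => (A s ω - A t ω) / (s - t)
  set g := fun ω => (A T ω - A s ω) / (T - s)
  have hf : Integrable f μ := ((hA_int s hsT.le).sub (hA_int t (hts.trans hsT).le)).div_const _
  have hg : Integrable g μ := ((hA_int T le_rfl).sub (hA_int s hsT.le)).div_const _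
  have hslope : ∀ᵐ ω ∂μ, ∫ u in Ioc 0 T, β u ω * slopeContrast t s T u = f ω - g ω := by
    filter_upwards [hβ.prod_right_ae] with ω hω
    simp only [setIntegral_mul_slopeContrast ht hts.le hsT.le hω, f, g, hA]
  refine condExp_ae_eq_of_forall_setIntegral_eq (ℱ.le t) hf hg fun E hE => ?_
  have hγ := horth (fun u ω => slopeContrast t s T u * E.indicator 1 ω)
    (isStronglyProgressive_mul_indicator measurable_slopeContrast
      (fun _ hu => slopeContrast_of_le hu hts.le) hE)
    (lintegral_lintegral_sq_lt_top_of_abs_le μ _ fun u ω =>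
      (abs_mul_indicator_one_le _ E ω).trans (abs_slopeContrast_le hts.le hsT.le u))
    (ae_of_all _ fun ω => by
      rw [integral_mul_const, setIntegral_slopeContrast ht hts hsT, zero_mul])
  rw [← sub_eq_zero, ← integral_sub hf.integrableOn hg.integrableOn,
    ← integral_indicator (ℱ.le t E hE), ← hγ]
  refine integral_congr_ae ?_
  filter_upwards [hslope] with ω hω
  simp only [← mul_assoc, integral_mul_const, hω]
  by_cases hωE : ω ∈ E <;> simp [hωE]

theorem stmt19
    {Ω : Type*} {mΩ : MeasurableSpace Ω} (μ : Measure Ω) [IsProbabilityMeasure μ]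
    (ℱ : Filtration ℝ mΩ) (T : ℝ) (hT : 0 < T)
    (β : ℝ → Ω → ℝ) (hβ_prog : ProgMeasurable ℱ β)
    (hβ_fin : (∫⁻ ω, (∫⁻ u in Ioc (0:ℝ) T, ENNReal.ofReal ((β u ω)^2)) ∂μ) < ⊤)
    -- `A_t = ∫₀^t β_u du`
    (A : ℝ → Ω → ℝ) (hA : ∀ t ω, A t ω = ∫ u in Ioc (0:ℝ) t, β u ω)
    -- orthogonality: `E[∫₀^T β_u γ_u du] = 0` for every progressively measurable `γ`
    -- with `E[∫₀^T γ_u² du] < ∞` and `∫₀^T γ_u du = 0` a.s.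
    (horth : ∀ γ : ℝ → Ω → ℝ, ProgMeasurable ℱ γ →
      (∫⁻ ω, (∫⁻ u in Ioc (0:ℝ) T, ENNReal.ofReal ((γ u ω)^2)) ∂μ) < ⊤ →
      (∀ᵐ ω ∂μ, ∫ u in Ioc (0:ℝ) T, γ u ω = 0) →
      (∫ ω, (∫ u in Ioc (0:ℝ) T, β u ω * γ u ω) ∂μ) = 0) :
    ∀ s t : ℝ, 0 ≤ t → t < s → s < T →
      μ[fun ω => (A s ω - A t ω) / (s - t)|ℱ t]
        =ᵐ[μ] μ[fun ω => (A T ω - A s ω) / (T - s)|ℱ t] :=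
  stmt19_general μ ℱ T β hβ_prog hβ_fin A hA horth
end
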